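/- Let d ∈ ℕ, let Q ⊆ [0,1]^d be a dyadic cube of side length 2^{−k}, let E ⊆ [0,1]^d with E ∩ 7Q ≠ ∅, and let B be a closed ball of radius r = 7√d·2^{−k} with 7Q ⊆ B. Then sparse(E, 7Q) ≤ √d·(d+1)·sparse(E, B). -/

import Mathlib

open Metric MeasureTheory
open scoped ENNReal

noncomputable section

/-- The closed unit cube `[0,1]^d` in Euclidean space. -/
def unitCube (d : ℕ) : Set (EuclideanSpace ℝ (Fin d)) := {x | ∀ i, 0 ≤ x i ∧ x i ≤ 1}

/-- The dyadic cube `Q = Π_i [a_i·2^{-k}, (a_i+1)·2^{-k})`. -/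
def dyCube (d k : ℕ) (a : Fin d → ℕ) : Set (EuclideanSpace ℝ (Fin d)) :=
  {x | ∀ i, (a i : ℝ) * 2 ^ (-(k : ℤ)) ≤ x i ∧ x i < ((a i : ℝ) + 1) * 2 ^ (-(k : ℤ))}

/-- The tripled dyadic cube `3Q = Π_i [(a_i-1)·2^{-k}, (a_i+2)·2^{-k})`. -/
def dyCube3 (d k : ℕ) (a : Fin d → ℕ) : Set (EuclideanSpace ℝ (Fin d)) :=
  {x | ∀ i, ((a i : ℝ) - 1) * 2 ^ (-(k : ℤ)) ≤ x i ∧ x i < ((a i : ℝ) + 2) * 2 ^ (-(k : ℤ))}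

/-- The septupled dyadic cube `7Q = Π_i [(a_i-3)·2^{-k}, (a_i+4)·2^{-k})`. -/
def dyCube7 (d k : ℕ) (a : Fin d → ℕ) : Set (EuclideanSpace ℝ (Fin d)) :=
  {x | ∀ i, ((a i : ℝ) - 3) * 2 ^ (-(k : ℤ)) ≤ x i ∧ x i < ((a i : ℝ) + 4) * 2 ^ (-(k : ℤ))}

/-- `sparse(E, 7Q) = sup { dist(x, 7Q ∩ E) : x ∈ 7Q } / side(7Q)` with `side(7Q) = 7·2^{-k}`. -/
def sparse7 {d : ℕ} (E : Set (EuclideanSpace ℝ (Fin d))) (k : ℕ) (a : Fin d → ℕ) : ℝ :=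
  (⨆ x : (dyCube7 d k a),
    Metric.infDist (x : EuclideanSpace ℝ (Fin d)) (dyCube7 d k a ∩ E)) / (7 * 2 ^ (-(k : ℤ)))

/-- The sparsity of a set `E` in the closed ball `B(c,r)`:
`sparse(E,B) = sup { dist(x, E ∩ B) : x ∈ B } / r`. -/
def sparseIn {X : Type*} [MetricSpace X] (E : Set X) (c : X) (r : ℝ) : ℝ :=
  (⨆ x : (Metric.closedBall c r), Metric.infDist (x : X) (E ∩ Metric.closedBall c r)) / r

/-!
Let `S = r · sparse(E,B)`. Push a point `x ∈ 7Q` inward by a margin `M` slightly larger than `S`,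
to a point `z` at distance at most `√d · M` from `x`. Since `z ∈ 7Q ⊆ B`, some `y ∈ E ∩ B` lies
within `M` of `z`, and the margin forces `y ∈ 7Q`; so `dist(x, 7Q ∩ E) ≤ (√d + 1) S`. This needs
`2M ≤ side(7Q)`; when instead `side(7Q) ≤ 2S`, any point of `7Q ∩ E` is within
`√d · side(7Q) ≤ 2√d S` of `x`. Both bounds are at most `(d + 1) S`, and `side(7Q) = r / √d`.
-/

open Filter Topology

lemma Real.sqrt_natCast_le_self (n : ℕ) : √(n : ℝ) ≤ n := by
  rcases n.eq_zero_or_pos with rfl | hn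
  · simp
  · exact Real.sqrt_le_self_iff.2 (Or.inr (Nat.one_le_cast.2 hn))

lemma Real.two_mul_sqrt_le_add_one {x : ℝ} (hx : 0 ≤ x) : 2 * √x ≤ x + 1 := by
  nlinarith [sq_nonneg (√x - 1), Real.sq_sqrt hx]

lemma Real.exists_mem_Icc_dist_le {L s x M : ℝ} (hx : x ∈ Set.Ico L (L + s)) (hM₀ : 0 ≤ M)
    (hM : 2 * M ≤ s) : ∃ z ∈ Set.Icc (L + M) (L + s - M), dist x z ≤ M := by
  refine ⟨max (L + M) (min x (L + s - M)),
    ⟨le_max_left _ _, max_le (by linarith) (min_le_right _ _)⟩, ?_⟩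
  obtain ⟨hxL, hxR⟩ := hx
  rw [Real.dist_eq, abs_le]
  constructor <;> cases max_cases (L + M) (min x (L + s - M)) <;>
    cases min_cases x (L + s - M) <;> linarith

section CubeIco

variable {ι : Type*} [Fintype ι]

def cubeIco (L : ι → ℝ) (s : ℝ) : Set (EuclideanSpace ℝ ι) :=
  {x | ∀ i, x i ∈ Set.Ico (L i) (L i + s)}

lemma EuclideanSpace.dist_le_sqrt_card_mul {x y : EuclideanSpace ℝ ι} {M : ℝ} (hM : 0 ≤ M)
    (h : ∀ i, dist (x i) (y i) ≤ M) : dist x y ≤ √(Fintype.card ι) * M := by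
  calc dist x y = √(∑ i, dist (x i) (y i) ^ 2) := EuclideanSpace.dist_eq x y
    _ ≤ √(∑ _i : ι, M ^ 2) := by gcongr with i; exact h i
    _ = √(Fintype.card ι) * M := by simp [Real.sqrt_mul, Real.sqrt_sq hM]

lemma dist_le_of_mem_cubeIco {L : ι → ℝ} {s : ℝ} (hs : 0 ≤ s) {x y : EuclideanSpace ℝ ι}
    (hx : x ∈ cubeIco L s) (hy : y ∈ cubeIco L s) : dist x y ≤ √(Fintype.card ι) * s :=
  EuclideanSpace.dist_le_sqrt_card_mul hs fun i =>
    Real.dist_le_of_mem_Icc (Set.Ico_subset_Icc_self (hx i)) (Set.Ico_subset_Icc_self (hy i))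
      |>.trans_eq (by ring)

lemma infDist_inter_cubeIco_le_of_lt {L : ι → ℝ} {s S M : ℝ} {F : Set (EuclideanSpace ℝ ι)}
    (hF : F.Nonempty) (hS : ∀ z ∈ cubeIco L s, infDist z F ≤ S) (hSM : S < M)
    (hMs : 2 * M ≤ s) {x : EuclideanSpace ℝ ι} (hx : x ∈ cubeIco L s) :
    infDist x (cubeIco L s ∩ F) ≤ (√(Fintype.card ι) + 1) * M := by
  have hM : 0 < M := infDist_nonneg.trans (hS x hx) |>.trans_lt hSM
  choose z hz hxz using fun i => Real.exists_mem_Icc_dist_le (hx i) hM.le hMs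
  set z' : EuclideanSpace ℝ ι := WithLp.toLp 2 z
  have hz' : z' ∈ cubeIco L s := fun i => ⟨by linarith [(hz i).1], by linarith [(hz i).2]⟩
  obtain ⟨y, hyF, hzy⟩ := (infDist_lt_iff hF).1 ((hS z' hz').trans_lt hSM)
  have hy : y ∈ cubeIco L s := fun i => by
    have := abs_lt.1 ((Real.dist_eq _ _).symm.trans_lt ((PiLp.dist_apply_le z' y i).trans_lt hzy))
    exact ⟨by linarith [(hz i).1], by linarith [(hz i).2]⟩
  calc infDist x (cubeIco L s ∩ F) ≤ dist x y := infDist_le_dist_of_mem ⟨hy, hyF⟩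
    _ ≤ dist x z' + dist z' y := dist_triangle x z' y
    _ ≤ √(Fintype.card ι) * M + M :=
      add_le_add (EuclideanSpace.dist_le_sqrt_card_mul hM.le hxz) hzy.le
    _ = (√(Fintype.card ι) + 1) * M := by ring

lemma infDist_inter_cubeIco_le {L : ι → ℝ} {s S : ℝ} {F : Set (EuclideanSpace ℝ ι)}
    (hs : 0 ≤ s) (hF : (cubeIco L s ∩ F).Nonempty)
    (hS : ∀ z ∈ cubeIco L s, infDist z F ≤ S) {x : EuclideanSpace ℝ ι}
    (hx : x ∈ cubeIco L s) :
    infDist x (cubeIco L s ∩ F) ≤ (Fintype.card ι + 1) * S := by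
  have hS₀ : 0 ≤ S := infDist_nonneg.trans (hS x hx)
  rcases le_or_gt s (2 * S) with hsS | hSs
  · obtain ⟨e, he⟩ := hF
    calc infDist x (cubeIco L s ∩ F) ≤ dist x e := infDist_le_dist_of_mem he
      _ ≤ √(Fintype.card ι) * s := dist_le_of_mem_cubeIco hs hx he.1
      _ ≤ 2 * √(Fintype.card ι) * S := by nlinarith [Real.sqrt_nonneg (Fintype.card ι)]
      _ ≤ (Fintype.card ι + 1) * S :=
        mul_le_mul_of_nonneg_right (Real.two_mul_sqrt_le_add_one (Nat.cast_nonneg _)) hS₀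
  · have hlim : Tendsto (fun M => (√(Fintype.card ι) + 1) * M) (𝓝[>] S)
        (𝓝 ((√(Fintype.card ι) + 1) * S)) :=
      ((continuous_const.mul continuous_id).tendsto S).mono_left nhdsWithin_le_nhds
    have hbound : ∀ᶠ M in 𝓝[>] S,
        infDist x (cubeIco L s ∩ F) ≤ (√(Fintype.card ι) + 1) * M :=
      mem_of_superset (Ioc_mem_nhdsGT (by linarith : S < s / 2)) fun M hM =>
        infDist_inter_cubeIco_le_of_lt hF.right hS hM.1 (by linarith [hM.2]) hx
    calc infDist x (cubeIco L s ∩ F) ≤ (√(Fintype.card ι) + 1) * S :=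
          ge_of_tendsto hlim hbound
      _ ≤ (Fintype.card ι + 1) * S := by gcongr; exact Real.sqrt_natCast_le_self _

end CubeIco

lemma infDist_le_mul_sparseIn {X : Type*} [MetricSpace X] {E : Set X} {c z : X} {r : ℝ}
    (hr : 0 ≤ r) (hE : (E ∩ closedBall c r).Nonempty) (hz : z ∈ closedBall c r) :
    infDist z (E ∩ closedBall c r) ≤ r * sparseIn E c r := by
  rcases hr.eq_or_lt with rfl | hr
  · obtain ⟨e, heE, he⟩ := hE
    have hze : z = e := by
      rw [closedBall_zero, Set.mem_singleton_iff] at hz he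
      rw [hz, he]
    have hzE : z ∈ E ∩ closedBall c 0 := ⟨hze ▸ heE, hz⟩
    rw [infDist_zero_of_mem hzE, zero_mul]
  · obtain ⟨e, he⟩ := hE
    have hbdd : BddAbove (Set.range fun w : closedBall c r =>
        infDist (w : X) (E ∩ closedBall c r)) :=
      ⟨diam (closedBall c r), Set.forall_mem_range.2 fun w =>
        (infDist_le_dist_of_mem he).trans
          (dist_le_diam_of_mem isBounded_closedBall w.2 he.2)⟩
    rw [sparseIn, mul_div_cancel₀ _ hr.ne']
    exact le_ciSup hbdd ⟨z, hz⟩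

lemma dyCube7_eq_cubeIco (d k : ℕ) (a : Fin d → ℕ) :
    dyCube7 d k a = cubeIco (fun i => ((a i : ℝ) - 3) * 2 ^ (-(k : ℤ))) (7 * 2 ^ (-(k : ℤ))) := by
  ext x
  refine forall_congr' fun i => and_congr Iff.rfl ?_
  rw [show ((a i : ℝ) + 4) * 2 ^ (-(k : ℤ)) = ((a i : ℝ) - 3) * 2 ^ (-(k : ℤ)) + 7 * 2 ^ (-(k : ℤ))
    by ring]

theorem sparse_cube_le_sparse_ball_general (d k : ℕ) (a : Fin d → ℕ)
    (E : Set (EuclideanSpace ℝ (Fin d)))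
    (hne : (E ∩ dyCube7 d k a).Nonempty)
    (c : EuclideanSpace ℝ (Fin d))
    (hQB : dyCube7 d k a ⊆ Metric.closedBall c (7 * Real.sqrt d * 2 ^ (-(k : ℤ)))) :
    sparse7 E k a ≤
      Real.sqrt d * ((d : ℝ) + 1) * sparseIn E c (7 * Real.sqrt d * 2 ^ (-(k : ℤ))) := by
  set r := 7 * Real.sqrt d * 2 ^ (-(k : ℤ))
  have hside : (0 : ℝ) < 7 * 2 ^ (-(k : ℤ)) := by positivity
  obtain ⟨e, heE, he⟩ := hne
  have heB : e ∈ dyCube7 d k a ∩ (E ∩ closedBall c r) := ⟨he, heE, hQB he⟩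
  have hlocal : ∀ x ∈ dyCube7 d k a,
      infDist x (dyCube7 d k a ∩ E) ≤ (d + 1) * (r * sparseIn E c r) := fun x hx =>
    calc infDist x (dyCube7 d k a ∩ E)
        ≤ infDist x (dyCube7 d k a ∩ (E ∩ closedBall c r)) :=
          infDist_le_infDist_of_subset
            (Set.inter_subset_inter_right _ Set.inter_subset_left) ⟨e, heB⟩
      _ ≤ (d + 1) * (r * sparseIn E c r) := by
          rw [dyCube7_eq_cubeIco] at hx heB hQB ⊢
          simpa only [Fintype.card_fin] using infDist_inter_cubeIco_le hside.le ⟨e, heB⟩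
            (fun z hz => infDist_le_mul_sparseIn (by positivity) ⟨e, heB.2⟩ (hQB hz)) hx
  have : Nonempty (dyCube7 d k a) := ⟨⟨e, he⟩⟩
  rw [sparse7, div_le_iff₀ hside]
  calc (⨆ x : dyCube7 d k a, infDist (x : EuclideanSpace ℝ (Fin d)) (dyCube7 d k a ∩ E))
      ≤ (d + 1) * (r * sparseIn E c r) := ciSup_le fun x => hlocal x x.2
    _ = √d * (d + 1) * sparseIn E c r * (7 * 2 ^ (-(k : ℤ))) := by ring

/-- If `Q ⊆ [0,1]^d` is a dyadic cube of side `2^{-k}`, `E ⊆ [0,1]^d` meets `7Q`, and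
`B` is a closed ball of radius `7√d·2^{-k}` containing `7Q`, then
`sparse(E,7Q) ≤ √d·(d+1)·sparse(E,B)`. -/
theorem sparse_cube_le_sparse_ball (d k : ℕ) (a : Fin d → ℕ) (ha : ∀ i, a i < 2 ^ k)
    (E : Set (EuclideanSpace ℝ (Fin d))) (hE : E ⊆ unitCube d)
    (hne : (E ∩ dyCube7 d k a).Nonempty)
    (c : EuclideanSpace ℝ (Fin d))
    (hQB : dyCube7 d k a ⊆ Metric.closedBall c (7 * Real.sqrt d * 2 ^ (-(k : ℤ)))) :
    sparse7 E k a ≤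
      Real.sqrt d * ((d : ℝ) + 1) * sparseIn E c (7 * Real.sqrt d * 2 ^ (-(k : ℤ))) :=
  sparse_cube_le_sparse_ball_general d k a E hne c hQB
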